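/- arXiv:1702.00959 — 7 statements merged into one kernel-verified Lean document; each statement's English description precedes it below -/
import Mathlib

section
/- For natural numbers k ≥ 1 and p with p > 2(1+k)/k, the polynomial X_{(k,p)}(x) = x^{p+1}(x^{2k+3} - x^{2k+2} - x^{2k+1} + 1) + x^{2k+3} - x^2 - x + 1 has a real root strictly greater than 1. -/
theorem stmt_3 (k p : ℕ) (hk : k ≥ 1) (hp : (p : ℝ) > 2 * (1 + k) / k) :
    ∃ x : ℝ, x > 1 ∧
      x ^ (p + 1) * (x ^ (2 * k + 3) - x ^ (2 * k + 2) - x ^ (2 * k + 1) + 1)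
        + x ^ (2 * k + 3) - x ^ 2 - x + 1 = 0 := by
  set S : ℝ → ℝ := fun x => ∑ i ∈ Finset.range (2 * k + 1), x ^ i with hS_def
  set g : ℝ → ℝ := fun x =>
    x ^ (p + 2 * k + 3) - x ^ (p + 1) * S x + x ^ 2 * S x - 1 with hg_def
  set f : ℝ → ℝ := fun x =>
    x ^ (p + 1) * (x ^ (2 * k + 3) - x ^ (2 * k + 2) - x ^ (2 * k + 1) + 1)
      + x ^ (2 * k + 3) - x ^ 2 - x + 1 with hf_def
  have key : ∀ x : ℝ, f x = (x - 1) * g x := by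
    intro x
    simp only [hf_def, hg_def, hS_def]
    linear_combination (x ^ (p + 1) - x ^ 2) * geom_sum_mul x (2 * k + 1)
  -- S 1 and derivative of S at 1
  have hS1 : S 1 = 2 * k + 1 := by simp [hS_def]
  have hS'sum : HasDerivAt S (∑ i ∈ Finset.range (2 * k + 1), (i : ℝ) * 1 ^ (i - 1)) 1 := by
    apply HasDerivAt.fun_sum
    intro i _
    exact hasDerivAt_pow i 1
  have hsum : (∑ i ∈ Finset.range (2 * k + 1), (i : ℝ) * 1 ^ (i - 1)) = k * (2 * k + 1) := by
    have : (∑ i ∈ Finset.range (2 * k + 1), (i : ℝ) * 1 ^ (i - 1))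
        = ∑ i ∈ Finset.range (2 * k + 1), (i : ℝ) := by
      apply Finset.sum_congr rfl; intro i _; simp
    rw [this]
    have h2 : ((∑ i ∈ Finset.range (2 * k + 1), i) : ℝ) * 2 = (2 * k + 1) * (2 * k) := by
      have := Finset.sum_range_id_mul_two (2 * k + 1)
      have := congrArg (Nat.cast (R := ℝ)) this
      push_cast at this
      simpa using this
    push_cast at h2 ⊢
    linear_combination h2 / 2
  rw [hsum] at hS'sum
  -- derivative of g at 1
  have hg : HasDerivAt g
      ((↑(p + 2 * k + 3) : ℝ) * 1 ^ (p + 2 * k + 3 - 1)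
        - ((↑(p + 1) : ℝ) * 1 ^ (p + 1 - 1) * S 1 + 1 ^ (p + 1) * (k * (2 * k + 1)))
        + ((2 : ℝ) * 1 ^ (2 - 1) * S 1 + 1 ^ 2 * (k * (2 * k + 1)))) 1 := by
    have h1 := hasDerivAt_pow (p + 2 * k + 3) (1 : ℝ)
    have h2 := (hasDerivAt_pow (p + 1) (1 : ℝ)).mul hS'sum
    have h3 := (hasDerivAt_pow 2 (1 : ℝ)).mul hS'sum
    have := ((h1.sub h2).add h3).sub_const 1
    simpa [hg_def] using this
  have hkpos : (0 : ℝ) < k := by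
    have : (1 : ℝ) ≤ k := by exact_mod_cast hk
    linarith
  have hp' : 2 * (1 + (k : ℝ)) < p * k := by
    rw [gt_iff_lt, div_lt_iff₀ hkpos] at hp
    linarith
  have hDneg : ((↑(p + 2 * k + 3) : ℝ) * 1 ^ (p + 2 * k + 3 - 1)
        - ((↑(p + 1) : ℝ) * 1 ^ (p + 1 - 1) * S 1 + 1 ^ (p + 1) * (k * (2 * k + 1)))
        + ((2 : ℝ) * 1 ^ (2 - 1) * S 1 + 1 ^ 2 * (k * (2 * k + 1)))) < 0 := by
    rw [hS1]
    simp only [one_pow]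
    push_cast
    nlinarith [hp']
  have hg1 : g 1 = 0 := by simp [hg_def, hS1]
  -- slope argument: exists x0 ∈ (1,2) with g x0 < 0
  rw [hasDerivAt_iff_tendsto_slope] at hg
  have hev : ∀ᶠ x in nhdsWithin (1 : ℝ) (Set.Ioi 1), slope g 1 x < 0 := by
    have h1 : ∀ᶠ x in nhdsWithin (1 : ℝ) {(1 : ℝ)}ᶜ, slope g 1 x < 0 :=
      hg.eventually_lt_const hDneg
    exact h1.filter_mono (nhdsWithin_mono _ (fun x hx => ne_of_gt hx))
  have hmem : Set.Ioo (1 : ℝ) 2 ∈ nhdsWithin (1 : ℝ) (Set.Ioi 1) :=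
    Ioo_mem_nhdsGT_of_mem ⟨le_refl 1, one_lt_two⟩
  obtain ⟨x0, hx0slope, hx0mem⟩ := (hev.and (Filter.eventually_of_mem hmem fun x hx => hx)).exists
  have hx01 : (1 : ℝ) < x0 := hx0mem.1
  have hx02 : x0 < 2 := hx0mem.2
  have hgx0 : g x0 < 0 := by
    rw [slope_def_field, hg1, sub_zero] at hx0slope
    have hpos : 0 < x0 - 1 := by linarith
    have := (div_neg_iff.mp hx0slope)
    rcases this with ⟨h1, h2⟩ | ⟨h1, h2⟩
    · linarith
    · exact h1
  have hfx0 : f x0 < 0 := by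
    rw [key x0]
    exact mul_neg_of_pos_of_neg (by linarith) hgx0
  have hf2 : 0 < f 2 := by
    have e1 : (2 : ℝ) ^ (2 * k + 3) - 2 ^ (2 * k + 2) - 2 ^ (2 * k + 1) = 2 ^ (2 * k + 1) := by
      ring
    have h1 : (1 : ℝ) ≤ 2 ^ (2 * k + 1) := one_le_pow₀ (by norm_num)
    have h2 : (0 : ℝ) < 2 ^ (p + 1) := by positivity
    have e2 : f 2 = 2 ^ (p + 1) * (2 ^ (2 * k + 1) + 1) + 4 * 2 ^ (2 * k + 1) - 5 := by
      simp only [hf_def]; ring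
    have h3 : (0:ℝ) < 2 ^ (p + 1) * (2 ^ (2 * k + 1) + 1) := mul_pos h2 (by linarith)
    have h4 : (1:ℝ) ≤ 2 ^ (p + 1) := one_le_pow₀ (by norm_num)
    rw [e2]; nlinarith [h1, h4]
  -- IVT
  have hcont : Continuous f := by
    simp only [hf_def]; fun_prop
  have hivt := intermediate_value_Icc (le_of_lt hx02) hcont.continuousOn
  have h0mem : (0 : ℝ) ∈ Set.Icc (f x0) (f 2) := ⟨le_of_lt hfx0, le_of_lt hf2⟩
  obtain ⟨c, hcmem, hfc⟩ := hivt h0mem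
  exact ⟨c, lt_of_lt_of_le hx01 hcmem.1, hfc⟩
end

section
/- Let α₁ be a nonzero complex number with α₁ ≠ 1, fix a square root √α₁ of α₁, and define f(x,y) = (1/α₁ + α₁ x + y, x/(1/α₁ + y)). Define V₁(x,y) = (√α₁ − α₁(α₁+√α₁)x + α₁(1+2√α₁)y + α₁²(1+√α₁)y²)/(1 + α₁ y). Then V₁(f(x,y)) = −√α₁ · V₁(x,y) wherever both sides are defined (i.e., 1/α₁ + y ≠ 0 and the relevant denominators are nonzero). -/
theorem stmt_7 (α s x y : ℂ) (hα : α ≠ 0) (hα1 : α ≠ 1) (hs : s ^ 2 = α)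
    (h1 : 1 / α + y ≠ 0) (h2 : 1 + α * y ≠ 0)
    (h3 : 1 + α * (x / (1 / α + y)) ≠ 0) :
    let V₁ : ℂ → ℂ → ℂ := fun u v =>
      (s - α * (α + s) * u + α * (1 + 2 * s) * v + α ^ 2 * (1 + s) * v ^ 2)
        / (1 + α * v)
    V₁ (1 / α + α * x + y) (x / (1 / α + y)) = -s * V₁ x y := by
  intro V₁
  have key : x / (1 / α + y) = α * x / (1 + α * y) := by
    rw [div_eq_div_iff h1 h2]; field_simp
  have h3' : 1 + α * y + α ^ 2 * x ≠ 0 := by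
    rw [key] at h3
    intro h
    apply h3
    field_simp
    linear_combination h
  simp only [V₁]
  rw [key]
  have hd : 1 + α * (α * x / (1 + α * y)) = (1 + α * y + α ^ 2 * x) / (1 + α * y) := by
    field_simp
  rw [hd, div_eq_iff (div_ne_zero h3' h2)]
  field_simp
  linear_combination ((1 - α*x + 2*α*y + α^2*y^2)*(1 + α*y + α^2*x)) * hs
end

section
/- Let α₁ be a nonzero complex number with α₁ ≠ 1, fix a square root √α₁, define f(x,y) = (1/α₁ + α₁ x + y, x/(1/α₁ + y)) and V₂(x,y) = (−1 + α₁(1−√α₁)x + (√α₁−2α₁)y + α₁(√α₁−α₁)y²)/(1 + α₁ y). Then V₂(f(x,y)) = √α₁ · V₂(x,y) wherever defined. -/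
/-!
Put `D = 1 + α y` and `E = D + α² x`, so that `f (x, y) = (E / α, α x / D)` and
`1 + α · (α x / D) = E / D`. Clearing these denominators turns the claim into the polynomial identity
`D² · N (f (x, y)) = s E · N (x, y)` for the numerator `N` of `V₂`, which holds once `α` is replaced
by `s²`.
-/

section
variable {R : Type*} [CommRing R]

def V₂num (α s u v : R) : R :=
  -1 + α * (1 - s) * u + (s - 2 * α) * v + α * (s - α) * v ^ 2

/-- `hu` and `hv` say that `(u, v) = f (x, y)` with the denominators cleared. -/
theorem V₂num_map {α s x y u v : R} (hs : s ^ 2 = α)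
    (hu : α * u = 1 + α * y + α ^ 2 * x) (hv : (1 + α * y) * v = α * x) :
    (1 + α * y) ^ 2 * V₂num α s u v = s * (1 + α * y + α ^ 2 * x) * V₂num α s x y := by
  subst hs
  unfold V₂num
  linear_combination (1 - s) * (1 + s ^ 2 * y) ^ 2 * hu +
    ((s - 2 * s ^ 2) * (1 + s ^ 2 * y) +
      s ^ 2 * (s - s ^ 2) * ((1 + s ^ 2 * y) * v + s ^ 2 * x)) * hv

end

section
variable {K : Type*} [Field K]

def V₂ (α s u v : K) : K := V₂num α s u v / (1 + α * v)

theorem V₂_map {α s x y : K} (hα : α ≠ 0) (hs : s ^ 2 = α) (hD : 1 + α * y ≠ 0)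
    (hE : 1 + α * y + α ^ 2 * x ≠ 0) :
    V₂ α s (1 / α + α * x + y) (α * x / (1 + α * y)) = s * V₂ α s x y := by
  have hden : 1 + α * (α * x / (1 + α * y)) = (1 + α * y + α ^ 2 * x) / (1 + α * y) := by
    field_simp
  have key := V₂num_map (x := x) (y := y) (u := 1 / α + α * x + y) (v := α * x / (1 + α * y)) hs
    (by field_simp; ring) (by field_simp)
  unfold V₂
  rw [hden, div_div_eq_mul_div, mul_div_assoc', div_eq_div_iff hE hD]
  linear_combination key

end

theorem stmt_8_general (α s x y : ℂ) (hα : α ≠ 0) (hs : s ^ 2 = α)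
    (h2 : 1 + α * y ≠ 0)
    (h3 : 1 + α * (x / (1 / α + y)) ≠ 0) :
    let V₂ : ℂ → ℂ → ℂ := fun u v =>
      (-1 + α * (1 - s) * u + (s - 2 * α) * v + α * (s - α) * v ^ 2)
        / (1 + α * v)
    V₂ (1 / α + α * x + y) (x / (1 / α + y)) = s * V₂ x y := by
  have hv : x / (1 / α + y) = α * x / (1 + α * y) := by
    rw [div_add' _ _ _ hα, div_div_eq_mul_div]
    ring
  rw [hv] at h3 ⊢
  have hE : 1 + α * y + α ^ 2 * x ≠ 0 := by
    contrapose! h3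
    field_simp
    linear_combination h3
  exact V₂_map hα hs h2 hE

theorem stmt_8 (α s x y : ℂ) (hα : α ≠ 0) (hα1 : α ≠ 1) (hs : s ^ 2 = α)
    (h1 : 1 / α + y ≠ 0) (h2 : 1 + α * y ≠ 0)
    (h3 : 1 + α * (x / (1 / α + y)) ≠ 0) :
    let V₂ : ℂ → ℂ → ℂ := fun u v =>
      (-1 + α * (1 - s) * u + (s - 2 * α) * v + α * (s - α) * v ^ 2)
        / (1 + α * v)
    V₂ (1 / α + α * x + y) (x / (1 / α + y)) = s * V₂ x y :=
  stmt_8_general α s x y hα hs h2 h3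
end

section
/- Define f(x,y) = (1 + x + y, x/(1+y)) on ℂ² (where y ≠ −1), V₁(x,y) = (1 − 2x + 3y + 2y²)/(1+y) and V₂(x,y) = (1 + 2x + 3y + 2y²)/(2(1+y)). Then V₁(f(x,y)) = −V₁(x,y) and V₂(f(x,y)) = V₂(x,y) + 1 wherever defined. In particular W(x,y) = V₁(x,y)² satisfies W(f(x,y)) = W(x,y), i.e., W is a first integral of f. -/
/-! On `1 + y ≠ 0` and `1 + x + y ≠ 0` the map `f (x, y) = (1 + x + y, x / (1 + y))` is defined and
its second coordinate does not return to `-1`; after clearing the denominators `1 + y` and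
`1 + x + y` both functional equations are polynomial identities. Squaring the anti-invariance of
`V₁` gives the first integral `W = V₁ ^ 2`. -/

namespace BirationalFirstIntegral

variable {K : Type*} [Field K]

def V₁ (x y : K) : K := (1 - 2 * x + 3 * y + 2 * y ^ 2) / (1 + y)

def V₂ (x y : K) : K := (1 + 2 * x + 3 * y + 2 * y ^ 2) / (2 * (1 + y))

theorem one_add_div_one_add {x y : K} (hy : 1 + y ≠ 0) :
    1 + x / (1 + y) = (1 + x + y) / (1 + y) := by
  field_simp
  ring

theorem one_add_add_ne_zero {x y : K} (hy : 1 + y ≠ 0) (hx : 1 + x / (1 + y) ≠ 0) :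
    1 + x + y ≠ 0 := by
  rw [one_add_div_one_add hy] at hx
  exact left_ne_zero_of_mul (by simpa [div_eq_mul_inv] using hx)

theorem V₁_map {x y : K} (hy : 1 + y ≠ 0) (hxy : 1 + x + y ≠ 0) :
    V₁ (1 + x + y) (x / (1 + y)) = -V₁ x y := by
  rw [V₁, V₁, one_add_div_one_add hy]
  field_simp
  ring

theorem V₂_map [NeZero (2 : K)] {x y : K} (hy : 1 + y ≠ 0) (hxy : 1 + x + y ≠ 0) :
    V₂ (1 + x + y) (x / (1 + y)) = V₂ x y + 1 := by
  rw [V₂, V₂, one_add_div_one_add hy]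
  field_simp
  ring

theorem sq_V₁_map {x y : K} (hy : 1 + y ≠ 0) (hxy : 1 + x + y ≠ 0) :
    V₁ (1 + x + y) (x / (1 + y)) ^ 2 = V₁ x y ^ 2 := by
  rw [V₁_map hy hxy, neg_sq]

end BirationalFirstIntegral

theorem stmt_9 (x y : ℂ) (h1 : 1 + y ≠ 0) (h2 : 1 + x / (1 + y) ≠ 0) :
    let V₁ : ℂ → ℂ → ℂ := fun u v => (1 - 2 * u + 3 * v + 2 * v ^ 2) / (1 + v)
    let V₂ : ℂ → ℂ → ℂ := fun u v =>
      (1 + 2 * u + 3 * v + 2 * v ^ 2) / (2 * (1 + v))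
    let W : ℂ → ℂ → ℂ := fun u v => (V₁ u v) ^ 2
    V₁ (1 + x + y) (x / (1 + y)) = -V₁ x y ∧
      V₂ (1 + x + y) (x / (1 + y)) = V₂ x y + 1 ∧
      W (1 + x + y) (x / (1 + y)) = W x y := by
  have hxy := BirationalFirstIntegral.one_add_add_ne_zero h1 h2
  exact ⟨BirationalFirstIntegral.V₁_map h1 hxy, BirationalFirstIntegral.V₂_map h1 hxy,
    BirationalFirstIntegral.sq_V₁_map h1 hxy⟩
end

section
/- Let α₁ ∈ ℂ with α₁ ∉ {0, −1} and suppose α₁^{k+1} = 1 for some k ∈ ℕ with α₁ ≠ ±1. Let f(x,y) = (1/α₁ + α₁x + y, x/(1/α₁ + y)). Then f is periodic of period 2k+2, i.e., the (2k+2)-fold iterate of f is the identity wherever defined. -/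
/-!
Write `(xⱼ, yⱼ)` for the orbit of `(x, y)`. Since `yⱼ₊₁ = xⱼ / (1/α + yⱼ)`, the first coordinate
is recovered from the second one as `xⱼ = yⱼ₊₁ (1/α + yⱼ)`, and substituting this into the map
gives `yⱼ₊₂ = 1 + α yⱼ`. The affine map `t ↦ 1 + α t` is conjugate, by a translation, to
multiplication by `α`, hence has period `k + 1`. So `y₂ₖ₊₂ = y₀`, and `y₂ₖ₊₁` is the preimage of
`y₁` under `t ↦ 1 + α t`; these two values pin down `x₂ₖ₊₂ = x₀`.
-/

variable {K : Type*} [Field K]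

def birationalMap (α : K) (p : K × K) : K × K :=
  (1 / α + α * p.1 + p.2, p.1 / (1 / α + p.2))

lemma fst_eq_snd_birationalMap_mul {α : K} {p : K × K} (hp : 1 / α + p.2 ≠ 0) :
    p.1 = (birationalMap α p).2 * (1 / α + p.2) :=
  (div_mul_cancel₀ p.1 hp).symm

lemma fst_birationalMap {α : K} {p : K × K} (hp : 1 / α + p.2 ≠ 0) :
    (birationalMap α p).1 = (1 / α + p.2) * (1 + α * (birationalMap α p).2) := by
  conv_lhs => rw [birationalMap, fst_eq_snd_birationalMap_mul hp]
  ring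

lemma snd_birationalMap_birationalMap {α : K} (hα : α ≠ 0) {p : K × K}
    (hp : 1 / α + p.2 ≠ 0) (hfp : 1 / α + (birationalMap α p).2 ≠ 0) :
    (birationalMap α (birationalMap α p)).2 = 1 + α * p.2 := by
  calc (birationalMap α (birationalMap α p)).2
      = (1 / α + p.2) * (1 + α * (birationalMap α p).2) / (1 / α + (birationalMap α p).2) := by
        rw [birationalMap, fst_birationalMap hp]
    _ = (1 / α + p.2) * (α * (1 / α + (birationalMap α p).2)) / (1 / α + (birationalMap α p).2) := by
        field_simp
    _ = 1 + α * p.2 := by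
        rw [mul_div_assoc, mul_div_assoc, div_self hfp]
        field_simp

lemma snd_iterate_two_mul_birationalMap {α : K} (hα : α ≠ 0) (n : ℕ) {p : K × K}
    (hp : ∀ j < 2 * n, 1 / α + ((birationalMap α)^[j] p).2 ≠ 0) :
    ((birationalMap α)^[2 * n] p).2 = (fun t => 1 + α * t)^[n] p.2 := by
  induction n generalizing p with
  | zero => rfl
  | succ n ih =>
    have hshift : ∀ j < 2 * n,
        1 / α + ((birationalMap α)^[j] (birationalMap α (birationalMap α p))).2 ≠ 0 := by
      intro j hj
      simpa only [← Function.iterate_succ_apply] using hp (j + 2) (by omega)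
    rw [Function.iterate_succ_apply, ← snd_birationalMap_birationalMap (p := p) hα (hp 0 (by omega))
      (hp 1 (by omega)), ← ih hshift, show 2 * (n + 1) = 2 * n + 1 + 1 by ring,
      Function.iterate_succ_apply, Function.iterate_succ_apply]

-- Translating by `(α - 1)⁻¹`, minus the fixed point, conjugates `t ↦ 1 + α t` to `t ↦ α t`.
lemma iterate_one_add_mul_eq_self {α : K} (hα : α ≠ 1) {n : ℕ} (hn : α ^ n = 1) (t : K) :
    (fun s => 1 + α * s)^[n] t = t := by
  set c := (α - 1)⁻¹
  have hconj : Function.Semiconj (· + c) (fun s => 1 + α * s) (α * ·) := by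
    intro s
    have : (α - 1) * c = 1 := mul_inv_cancel₀ (sub_ne_zero.mpr hα)
    linear_combination -this
  have := (hconj.iterate_right n) t
  simp only [mul_left_iterate, hn, one_mul] at this
  exact add_right_cancel this

theorem stmt_10_general (α : ℂ) (k : ℕ)
    (hroot : α ^ (k + 1) = 1) (hα1 : α ≠ 1)
    (f : ℂ × ℂ → ℂ × ℂ)
    (hf : f = fun p => (1 / α + α * p.1 + p.2, p.1 / (1 / α + p.2)))
    (x y : ℂ)
    (hdef : ∀ j < 2 * k + 2, 1 / α + (f^[j] (x, y)).2 ≠ 0) :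
    f^[2 * k + 2] (x, y) = (x, y) := by
  obtain rfl : f = birationalMap α := hf
  have hα : α ≠ 0 := by rintro rfl; simp at hroot
  have hy : ((birationalMap α)^[2 * k + 1 + 1] (x, y)).2 = y := by
    rw [show 2 * k + 1 + 1 = 2 * (k + 1) by ring, snd_iterate_two_mul_birationalMap hα (k + 1) hdef,
      iterate_one_add_mul_eq_self hα1 hroot]
  have hqy : 1 + α * ((birationalMap α)^[2 * k + 1] (x, y)).2 = (birationalMap α (x, y)).2 := by
    have hperiod := iterate_one_add_mul_eq_self hα1 hroot (birationalMap α (x, y)).2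
    rw [Function.iterate_succ_apply'] at hperiod
    rwa [Function.iterate_succ_apply, snd_iterate_two_mul_birationalMap hα k fun j hj => by
      simpa only [← Function.iterate_succ_apply] using hdef (j + 1) (by omega)]
  have hx : x = (birationalMap α (x, y)).2 * (1 / α + y) :=
    fst_eq_snd_birationalMap_mul (p := (x, y)) (hdef 0 (by omega))
  refine Prod.ext ?_ hy
  rw [Function.iterate_succ_apply', fst_birationalMap (hdef (2 * k + 1) (by omega)),
    ← Function.iterate_succ_apply' (birationalMap α), hy]
  conv_rhs => rw [hx, ← hqy]
  field_simp

theorem stmt_10 (α : ℂ) (hα0 : α ≠ 0) (hαm1 : α ≠ -1) (k : ℕ)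
    (hroot : α ^ (k + 1) = 1) (hα1 : α ≠ 1) (hαn1 : α ≠ -1)
    (f : ℂ × ℂ → ℂ × ℂ)
    (hf : f = fun p => (1 / α + α * p.1 + p.2, p.1 / (1 / α + p.2)))
    (x y : ℂ)
    (hdef : ∀ j < 2 * k + 2, 1 / α + (f^[j] (x, y)).2 ≠ 0) :
    f^[2 * k + 2] (x, y) = (x, y) :=
  stmt_10_general α k hroot hα1 f hf x y hdef
end

section
/- Let f(x,y) = (1/4 + x + y, x/(−1/2 + y)) and define V(x,y) = (256x³y² + 384x²y³ + 128xy⁴ + 128x³y + 192x²y² + 32xy³ − 16y⁴ − 16x² − 8xy + 8y² − 8x − 1)/(−4y² + 4x + 1)². Then V(f(x,y)) = V(x,y) wherever defined, i.e., V is a first integral of f. -/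
/-!
Substituting `x = w * (y - 1/2)` makes `f` polynomial, `f (x, y) = (1/4 + w * (y - 1/2) + y, w)`,
so after clearing the two squared denominators the invariance `V ∘ f = V` becomes a polynomial
identity in `w` and `y`.
-/

namespace QuadraticFirstIntegral

variable {K : Type*} [Field K]

def num (u v : K) : K :=
  256 * u ^ 3 * v ^ 2 + 384 * u ^ 2 * v ^ 3 + 128 * u * v ^ 4
    + 128 * u ^ 3 * v + 192 * u ^ 2 * v ^ 2 + 32 * u * v ^ 3
    - 16 * v ^ 4 - 16 * u ^ 2 - 8 * u * v + 8 * v ^ 2 - 8 * u - 1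

def den (u v : K) : K :=
  -4 * v ^ 2 + 4 * u + 1

def firstIntegral (u v : K) : K :=
  num u v / den u v ^ 2

theorem num_map_mul_den_sq [CharZero K] (w y : K) :
    num (1 / 4 + w * (-(1 / 2) + y) + y) w * den (w * (-(1 / 2) + y)) y ^ 2
      = num (w * (-(1 / 2) + y)) y * den (1 / 4 + w * (-(1 / 2) + y) + y) w ^ 2 := by
  simp only [num, den]
  ring

theorem firstIntegral_map [CharZero K] (x y : K) (hy : -(1 / 2) + y ≠ 0)
    (hxy : den x y ≠ 0) (hf : den (1 / 4 + x + y) (x / (-(1 / 2) + y)) ≠ 0) :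
    firstIntegral (1 / 4 + x + y) (x / (-(1 / 2) + y)) = firstIntegral x y := by
  obtain ⟨w, rfl⟩ : ∃ w, x = w * (-(1 / 2) + y) := ⟨x / (-(1 / 2) + y), (div_mul_cancel₀ x hy).symm⟩
  rw [mul_div_cancel_right₀ _ hy] at hf ⊢
  rw [firstIntegral, firstIntegral, div_eq_div_iff (pow_ne_zero 2 hf) (pow_ne_zero 2 hxy)]
  exact num_map_mul_den_sq w y

end QuadraticFirstIntegral

theorem stmt_12 (x y : ℂ) (h1 : -(1 / 2 : ℂ) + y ≠ 0)
    (h2 : -4 * y ^ 2 + 4 * x + 1 ≠ 0)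
    (h3 : -4 * (x / (-(1 / 2 : ℂ) + y)) ^ 2 + 4 * (1 / 4 + x + y) + 1 ≠ 0) :
    let V : ℂ → ℂ → ℂ := fun u v =>
      (256 * u ^ 3 * v ^ 2 + 384 * u ^ 2 * v ^ 3 + 128 * u * v ^ 4
        + 128 * u ^ 3 * v + 192 * u ^ 2 * v ^ 2 + 32 * u * v ^ 3
        - 16 * v ^ 4 - 16 * u ^ 2 - 8 * u * v + 8 * v ^ 2 - 8 * u - 1)
        / (-4 * v ^ 2 + 4 * u + 1) ^ 2
    V (1 / 4 + x + y) (x / (-(1 / 2 : ℂ) + y)) = V x y :=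
  QuadraticFirstIntegral.firstIntegral_map x y h1 h2 h3
end

section
/- Let f(x,y) = (x + y, x/(y−1)) and V(x,y) = (−2y² + 2x + y + 1)/(xy(x+y)). Then V(f(x,y)) = −V(x,y) wherever defined, and consequently W = V² is a first integral of f. -/
/-!
Write `V = N / D` with `N u v = -2 v² + 2 u + v + 1` and `D u v = u v (u + v)`. Along the map
`f (x, y) = (x + y, x / (y - 1))` both pick up the same factor `c = (x + y - 1) / (y - 1)²`, the
numerator with a minus sign: `N ∘ f = -c N` and `D ∘ f = c D`. Hence `V ∘ f = -V` as soon as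
`c ≠ 0`, and `x + y - 1 ≠ 0` is exactly what keeps the last factor `x + y + x / (y - 1)` of
`D ∘ f` nonzero.
-/

namespace ReversedInvariant

variable {K : Type*} [Field K]

def num (u v : K) : K := -2 * v ^ 2 + 2 * u + v + 1

def den (u v : K) : K := u * v * (u + v)

theorem num_comp {x y : K} (h1 : y - 1 ≠ 0) :
    num (x + y) (x / (y - 1)) = -((x + y - 1) / (y - 1) ^ 2) * num x y := by
  unfold num
  field_simp
  ring

theorem den_comp {x y : K} (h1 : y - 1 ≠ 0) :
    den (x + y) (x / (y - 1)) = (x + y - 1) / (y - 1) ^ 2 * den x y := by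
  unfold den
  field_simp
  ring

theorem add_add_div_sub_one {x y : K} (h1 : y - 1 ≠ 0) :
    x + y + x / (y - 1) = y * (x + y - 1) / (y - 1) := by
  field_simp
  ring

theorem num_div_den_comp {x y : K} (h1 : y - 1 ≠ 0) (h3 : x + y + x / (y - 1) ≠ 0) :
    num (x + y) (x / (y - 1)) / den (x + y) (x / (y - 1)) = -(num x y / den x y) := by
  have hc : (x + y - 1) / (y - 1) ^ 2 ≠ 0 := by
    rw [add_add_div_sub_one h1] at h3
    exact div_ne_zero (right_ne_zero_of_mul (div_ne_zero_iff.mp h3).1) (pow_ne_zero 2 h1)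
  rw [num_comp h1, den_comp h1, neg_mul, neg_div, mul_div_mul_left _ _ hc]

end ReversedInvariant

theorem stmt_14_general (x y : ℂ) (h1 : y - 1 ≠ 0)
    (h3 : x + y + x / (y - 1) ≠ 0) :
    let V : ℂ → ℂ → ℂ := fun u v =>
      (-2 * v ^ 2 + 2 * u + v + 1) / (u * v * (u + v))
    V (x + y) (x / (y - 1)) = -V x y ∧
      (V (x + y) (x / (y - 1))) ^ 2 = (V x y) ^ 2 := by
  intro V
  have reversed : V (x + y) (x / (y - 1)) = -V x y := ReversedInvariant.num_div_den_comp h1 h3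
  exact ⟨reversed, by rw [reversed, neg_sq]⟩

theorem stmt_14 (x y : ℂ) (h1 : y - 1 ≠ 0) (hx : x ≠ 0) (hy : y ≠ 0)
    (hxy : x + y ≠ 0) (h2 : x / (y - 1) ≠ 0)
    (h3 : x + y + x / (y - 1) ≠ 0) :
    let V : ℂ → ℂ → ℂ := fun u v =>
      (-2 * v ^ 2 + 2 * u + v + 1) / (u * v * (u + v))
    V (x + y) (x / (y - 1)) = -V x y ∧
      (V (x + y) (x / (y - 1))) ^ 2 = (V x y) ^ 2 :=
  stmt_14_general x y h1 h3
end
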